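/- Let V = ℂ^m viewed as a real inner product space with inner product ⟨v,w⟩ := Re(v,w), let J : V → V be multiplication by i, let f : V → ℝ be smooth, let p be a real number, and let x be a point with ∇f(x) ≠ 0. Define the vector field w by ⟨w(x), Y⟩ = Hess f(x)(J∇f(x), JY) for all Y. Then div(‖∇f‖^{p−2} w)(x) = ‖∇f(x)‖^{p−2} ⟪Hess f(x), J*Hess f(x)⟫_F + (p−2)‖∇f(x)‖^{p−4} ⟨Hess f(x)(∇f(x),·)^♯, (J*Hess f(x))(∇f(x),·)^♯⟩. -/

import Mathlib

open scoped InnerProductSpace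
set_option maxHeartbeats 1000000

/-- The Hessian of `f` at `x`, as a continuous bilinear form (the second Fréchet
derivative). -/
noncomputable def hess {V : Type*} [NormedAddCommGroup V] [InnerProductSpace ℝ V]
    (f : V → ℝ) (x : V) : V →L[ℝ] V →L[ℝ] ℝ :=
  fderiv ℝ (fderiv ℝ f) x

/-- The vector corresponding to a continuous linear functional under the Riesz
isomorphism: `⟨sharpC L, Y⟩ = L Y` for all `Y`. -/
noncomputable def sharpC {V : Type*} [NormedAddCommGroup V] [InnerProductSpace ℝ V]
    [CompleteSpace V] (L : V →L[ℝ] ℝ) : V :=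
  (InnerProductSpace.toDual ℝ V).symm L

/-- The divergence of a vector field `w` at `x`: the trace of its derivative with
respect to an orthonormal basis. -/
noncomputable def diver {V : Type*} [NormedAddCommGroup V] [InnerProductSpace ℝ V]
    [FiniteDimensional ℝ V] (w : V → V) (x : V) : ℝ :=
  ∑ i, ⟪fderiv ℝ w x (stdOrthonormalBasis ℝ V i), stdOrthonormalBasis ℝ V i⟫_ℝ

/-- Multiplication by `i` on `ℂ^m`, viewed as a continuous `ℝ`-linear map. -/
noncomputable def Jmap (m : ℕ) : EuclideanSpace ℂ (Fin m) →L[ℝ] EuclideanSpace ℂ (Fin m) :=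
  Complex.I • ContinuousLinearMap.id ℝ (EuclideanSpace ℂ (Fin m))

/-- The vector field `w` determined by `⟨w(x), Y⟩ = Hess f(x)(J∇f(x), JY)` for all `Y`,
where `J` is multiplication by `i`. -/
noncomputable def wfield {m : ℕ} (f : EuclideanSpace ℂ (Fin m) → ℝ)
    (x : EuclideanSpace ℂ (Fin m)) : EuclideanSpace ℂ (Fin m) :=
  sharpC ((hess f x (Jmap m (gradient f x))).comp (Jmap m))

open ContinuousLinearMap

noncomputable def sharpL (m : ℕ) :
    (EuclideanSpace ℂ (Fin m) →L[ℝ] ℝ) →L[ℝ] EuclideanSpace ℂ (Fin m) :=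
  (InnerProductSpace.toDual ℝ (EuclideanSpace ℂ (Fin m))).symm.toContinuousLinearEquiv.toContinuousLinearMap

lemma inner_sharpL {m : ℕ} (L : EuclideanSpace ℂ (Fin m) →L[ℝ] ℝ) (y : EuclideanSpace ℂ (Fin m)) :
    ⟪sharpL m L, y⟫_ℝ = L y :=
  InnerProductSpace.toDual_symm_apply

lemma sharpC_eq {m : ℕ} (L : EuclideanSpace ℂ (Fin m) →L[ℝ] ℝ) : sharpC L = sharpL m L := rfl

noncomputable def precompJ (m : ℕ) :
    (EuclideanSpace ℂ (Fin m) →L[ℝ] ℝ) →L[ℝ] (EuclideanSpace ℂ (Fin m) →L[ℝ] ℝ) :=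
  (ContinuousLinearMap.compL ℝ (EuclideanSpace ℂ (Fin m)) (EuclideanSpace ℂ (Fin m)) ℝ).flip (Jmap m)

example {m : ℕ} (L : EuclideanSpace ℂ (Fin m) →L[ℝ] ℝ) (v : EuclideanSpace ℂ (Fin m)) :
    precompJ m L v = L (Jmap m v) := rfl

lemma inner_J_left {m : ℕ} (v w : EuclideanSpace ℂ (Fin m)) :
    ⟪Jmap m v, w⟫_ℝ = - ⟪v, Jmap m w⟫_ℝ := by
  show ⟪Complex.I • v, w⟫_ℝ = - ⟪v, Complex.I • w⟫_ℝ
  simp [PiLp.inner_apply, Complex.inner, PiLp.smul_apply, Complex.mul_re, ← Finset.sum_neg_distrib]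
  rw [← Finset.sum_sub_distrib, Finset.sum_congr rfl]
  intro i _
  ring

section derivs
variable {m : ℕ} {f : EuclideanSpace ℂ (Fin m) → ℝ} (hf : ContDiff ℝ (⊤ : ℕ∞) f)
include hf

lemma contDiff_fderiv : ContDiff ℝ (⊤ : ℕ∞) (fderiv ℝ f) := hf.fderiv_right (by simp)

lemma contDiff_hess : ContDiff ℝ (⊤ : ℕ∞) (hess f) := (hf.fderiv_right (m := ((⊤ : ℕ∞) : WithTop ℕ∞)) (by simp)).fderiv_right (by simp)

lemma hess_symm (x : EuclideanSpace ℂ (Fin m)) (u v : EuclideanSpace ℂ (Fin m)) :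
    hess f x u v = hess f x v u :=
  second_derivative_symmetric (f := f) (f' := fderiv ℝ f)
    (fun y => (hf.differentiable (by simp) y).hasFDerivAt)
    ((contDiff_fderiv hf).differentiable (by simp) x).hasFDerivAt u v

lemma hasFDerivAt_hess (x : EuclideanSpace ℂ (Fin m)) :
    HasFDerivAt (hess f) (fderiv ℝ (hess f) x) x :=
  ((contDiff_hess hf).differentiable (by simp) x).hasFDerivAt

lemma T_symm12 (x : EuclideanSpace ℂ (Fin m)) (u v : EuclideanSpace ℂ (Fin m)) :
    fderiv ℝ (hess f) x u v = fderiv ℝ (hess f) x v u :=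
  second_derivative_symmetric (f := fderiv ℝ f) (f' := hess f)
    (fun y => ((contDiff_fderiv hf).differentiable (by simp) y).hasFDerivAt)
    (hasFDerivAt_hess hf x) u v

lemma T_symm23 (x : EuclideanSpace ℂ (Fin m)) (e u v : EuclideanSpace ℂ (Fin m)) :
    fderiv ℝ (hess f) x e u v = fderiv ℝ (hess f) x e v u := by
  have h1 := ((hasFDerivAt_hess hf x).clm_apply (hasFDerivAt_const u x)).clm_apply
    (hasFDerivAt_const v x)
  have h2 := ((hasFDerivAt_hess hf x).clm_apply (hasFDerivAt_const v x)).clm_apply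
    (hasFDerivAt_const u x)
  have h3 : (fun y => hess f y u v) = fun y => hess f y v u := funext fun y => hess_symm hf y u v
  rw [h3] at h1
  have h4 := congrArg (fun L => L e) (h1.unique h2)
  simpa using h4
end derivs

section main
variable {m : ℕ}

lemma skew_trace (B : EuclideanSpace ℂ (Fin m) →L[ℝ] EuclideanSpace ℂ (Fin m) →L[ℝ] ℝ)
    (hsym : ∀ u v, B u v = B v u) :
    ∑ i, B (stdOrthonormalBasis ℝ (EuclideanSpace ℂ (Fin m)) i)
      (Jmap m (stdOrthonormalBasis ℝ (EuclideanSpace ℂ (Fin m)) i)) = 0 := by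
  set e := stdOrthonormalBasis ℝ (EuclideanSpace ℂ (Fin m)) with he
  have key : ∀ u v : EuclideanSpace ℂ (Fin m), B u (Jmap m v) =
      ∑ j, ⟪e j, Jmap m v⟫_ℝ * B u (e j) := by
    intro u v
    conv_lhs => rw [← e.sum_repr' (Jmap m v)]
    rw [map_sum]
    simp [smul_eq_mul]
  have hterm : ∀ i j, ⟪e j, Jmap m (e i)⟫_ℝ * B (e i) (e j) =
      -(⟪e i, Jmap m (e j)⟫_ℝ * B (e j) (e i)) := by
    intro i j
    have h1 := inner_J_left (e j) (e i)
    have h2 := real_inner_comm (Jmap m (e j)) (e i)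
    have h3 : ⟪e j, Jmap m (e i)⟫_ℝ = - ⟪e i, Jmap m (e j)⟫_ℝ := by linarith
    rw [h3, hsym (e i) (e j)]
    ring
  have hS : ∑ i, B (e i) (Jmap m (e i)) = - ∑ i, B (e i) (Jmap m (e i)) := by
    calc ∑ i, B (e i) (Jmap m (e i)) = ∑ i, ∑ j, ⟪e j, Jmap m (e i)⟫_ℝ * B (e i) (e j) := by
          simp_rw [key]
      _ = ∑ i, ∑ j, -(⟪e i, Jmap m (e j)⟫_ℝ * B (e j) (e i)) := by
          refine Finset.sum_congr rfl fun i _ => Finset.sum_congr rfl fun j _ => hterm i j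
      _ = -∑ i, ∑ j, ⟪e i, Jmap m (e j)⟫_ℝ * B (e j) (e i) := by
          rw [← Finset.sum_neg_distrib]
          exact Finset.sum_congr rfl fun i _ => Finset.sum_neg_distrib _
      _ = -∑ i, ∑ j, ⟪e j, Jmap m (e i)⟫_ℝ * B (e i) (e j) := by rw [Finset.sum_comm]
      _ = - ∑ i, B (e i) (Jmap m (e i)) := by
          refine neg_inj.2 (Finset.sum_congr rfl fun i _ => (key (e i) (e i)).symm)
  linarith
end main

section grad
variable {m : ℕ} {f : EuclideanSpace ℂ (Fin m) → ℝ}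

noncomputable def Bmap (m : ℕ) : (EuclideanSpace ℂ (Fin m) →L[ℝ] ℝ) →L[ℝ] EuclideanSpace ℂ (Fin m) :=
  (sharpL m).comp (precompJ m)

lemma inner_Bmap (L : EuclideanSpace ℂ (Fin m) →L[ℝ] ℝ) (y : EuclideanSpace ℂ (Fin m)) :
    ⟪Bmap m L, y⟫_ℝ = L (Jmap m y) := inner_sharpL _ _

variable (hf : ContDiff ℝ (⊤ : ℕ∞) f)
include hf

lemma hasFDerivAt_gradient (x : EuclideanSpace ℂ (Fin m)) :
    HasFDerivAt (gradient f) ((sharpL m).comp (hess f x)) x := by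
  have h : HasFDerivAt (fderiv ℝ f) (hess f x) x :=
    ((contDiff_fderiv hf).differentiable (by simp) x).hasFDerivAt
  exact (sharpL m).hasFDerivAt.comp x h

lemma hasFDerivAt_inner_field (x : EuclideanSpace ℂ (Fin m)) :
    HasFDerivAt (fun y => hess f y (Jmap m (gradient f y)))
      ((hess f x).comp ((Jmap m).comp ((sharpL m).comp (hess f x))) +
        (fderiv ℝ (hess f) x).flip (Jmap m (gradient f x))) x := by
  have hc : HasFDerivAt (hess f) (fderiv ℝ (hess f) x) x := hasFDerivAt_hess hf x
  have hu : HasFDerivAt (fun y => Jmap m (gradient f y))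
      ((Jmap m).comp ((sharpL m).comp (hess f x))) x :=
    (Jmap m).hasFDerivAt.comp x (hasFDerivAt_gradient hf x)
  exact hc.clm_apply hu

lemma hasFDerivAt_wfield (x : EuclideanSpace ℂ (Fin m)) :
    HasFDerivAt (wfield f)
      ((Bmap m).comp ((hess f x).comp ((Jmap m).comp ((sharpL m).comp (hess f x))) +
        (fderiv ℝ (hess f) x).flip (Jmap m (gradient f x)))) x :=
  (Bmap m).hasFDerivAt.comp x (hasFDerivAt_inner_field hf x)

lemma hasFDerivAt_norm_grad (x : EuclideanSpace ℂ (Fin m)) (hx : gradient f x ≠ 0) :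
    HasFDerivAt (fun y => ‖gradient f y‖)
      (‖gradient f x‖⁻¹ • ((innerSL ℝ (gradient f x)).comp ((sharpL m).comp (hess f x)))) x := by
  have hg := hasFDerivAt_gradient hf x
  have h1 : HasFDerivAt (fun y => ‖gradient f y‖ ^ 2)
      (2 • ((innerSL ℝ (gradient f x)).comp ((sharpL m).comp (hess f x)))) x := hg.norm_sq
  have hne : ‖gradient f x‖ ^ 2 ≠ 0 :=
    pow_ne_zero 2 (norm_ne_zero_iff.2 hx)
  have h2 := h1.sqrt hne
  have h3 : (fun y => Real.sqrt (‖gradient f y‖ ^ 2)) = fun y => ‖gradient f y‖ := by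
    funext y; exact Real.sqrt_sq (norm_nonneg _)
  rw [h3] at h2
  refine h2.congr_fderiv (Eq.symm ?_)
  ext y
  have hpos : (0:ℝ) < ‖gradient f x‖ := norm_pos_iff.2 hx
  rw [Real.sqrt_sq (norm_nonneg _)]
  simp only [ContinuousLinearMap.smul_apply]
  rw [two_smul]
  simp only [ContinuousLinearMap.add_apply, smul_eq_mul]
  field_simp
  ring

lemma hasFDerivAt_rpow_norm_grad (p : ℝ) (x : EuclideanSpace ℂ (Fin m)) (hx : gradient f x ≠ 0) :
    HasFDerivAt (fun y => ‖gradient f y‖ ^ (p - 2))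
      (((p - 2) * ‖gradient f x‖ ^ (p - 2 - 1)) •
        (‖gradient f x‖⁻¹ • ((innerSL ℝ (gradient f x)).comp ((sharpL m).comp (hess f x))))) x := by
  have h := (hasFDerivAt_norm_grad hf x hx).rpow_const
    (p := p - 2) (Or.inl (norm_ne_zero_iff.2 hx))
  exact h
end grad

/-- On `ℂ^m` with `J` multiplication by `i`, for smooth `f : ℂ^m → ℝ`, real `p`, at a
point where `∇f ≠ 0`:
`div(‖∇f‖^{p−2} w) = ‖∇f‖^{p−2}⟪Hess f, J*Hess f⟫_F
  + (p−2)‖∇f‖^{p−4}⟨Hess f(∇f,·)^♯, (J*Hess f)(∇f,·)^♯⟩`. -/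
theorem div_scaled_wfield_eq {m : ℕ} (f : EuclideanSpace ℂ (Fin m) → ℝ)
    (hf : ContDiff ℝ (⊤ : ℕ∞) f) (p : ℝ)
    (x : EuclideanSpace ℂ (Fin m)) (hx : gradient f x ≠ 0) :
    diver (fun y => ‖gradient f y‖ ^ (p - 2) • wfield f y) x =
      ‖gradient f x‖ ^ (p - 2) *
        (∑ i, ∑ j,
          hess f x (stdOrthonormalBasis ℝ (EuclideanSpace ℂ (Fin m)) i)
              (stdOrthonormalBasis ℝ (EuclideanSpace ℂ (Fin m)) j) *
            hess f x (Jmap m (stdOrthonormalBasis ℝ (EuclideanSpace ℂ (Fin m)) i))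
              (Jmap m (stdOrthonormalBasis ℝ (EuclideanSpace ℂ (Fin m)) j))) +
      (p - 2) * ‖gradient f x‖ ^ (p - 4) *
        ⟪sharpC (hess f x (gradient f x)),
          sharpC ((hess f x (Jmap m (gradient f x))).comp (Jmap m))⟫_ℝ := by
  classical
  have hpos : (0:ℝ) < ‖gradient f x‖ := norm_pos_iff.2 hx
  set e := stdOrthonormalBasis ℝ (EuclideanSpace ℂ (Fin m)) with he
  set g := gradient f x with hg
  set H := hess f x with hH
  set T := fderiv ℝ (hess f) x with hT
  set D := H.comp ((Jmap m).comp ((sharpL m).comp H)) + T.flip (Jmap m g) with hD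
  set R' := ((p - 2) * ‖g‖ ^ (p - 2 - 1)) •
      (‖g‖⁻¹ • ((innerSL ℝ g).comp ((sharpL m).comp H))) with hR'
  have hfd : fderiv ℝ (fun y => ‖gradient f y‖ ^ (p - 2) • wfield f y) x =
      ‖g‖ ^ (p - 2) • ((Bmap m).comp D) + R'.smulRight (wfield f x) :=
    ((hasFDerivAt_rpow_norm_grad hf p x hx).smul (hasFDerivAt_wfield hf x)).fderiv
  have hdiver : diver (fun y => ‖gradient f y‖ ^ (p - 2) • wfield f y) x =
      ∑ i, ⟪(‖g‖ ^ (p - 2) • ((Bmap m).comp D) + R'.smulRight (wfield f x)) (e i), e i⟫_ℝ := by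
    rw [diver, hfd]
  rw [hdiver]
  have expand : ∀ i, ⟪(‖g‖ ^ (p - 2) • ((Bmap m).comp D) + R'.smulRight (wfield f x)) (e i), e i⟫_ℝ
      = ‖g‖ ^ (p - 2) * (D (e i) (Jmap m (e i))) + R' (e i) * ⟪wfield f x, e i⟫_ℝ := by
    intro i
    rw [ContinuousLinearMap.add_apply, ContinuousLinearMap.smul_apply,
      ContinuousLinearMap.smulRight_apply, inner_add_left, real_inner_smul_left,
      real_inner_smul_left, ContinuousLinearMap.comp_apply, inner_Bmap]
  simp_rw [expand]
  rw [Finset.sum_add_distrib, ← Finset.mul_sum]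
  -- first part
  have hDsplit : ∀ i, D (e i) (Jmap m (e i)) =
      H (Jmap m (sharpL m (H (e i)))) (Jmap m (e i)) + T (e i) (Jmap m g) (Jmap m (e i)) := by
    intro i
    rw [hD]
    simp only [ContinuousLinearMap.add_apply, ContinuousLinearMap.comp_apply,
      ContinuousLinearMap.flip_apply]
  have hskew : ∑ i, T (e i) (Jmap m g) (Jmap m (e i)) = 0 := by
    have hsym : ∀ u v, ((ContinuousLinearMap.apply ℝ (EuclideanSpace ℂ (Fin m) →L[ℝ] ℝ)
        (Jmap m g)).comp T) u v =
        ((ContinuousLinearMap.apply ℝ (EuclideanSpace ℂ (Fin m) →L[ℝ] ℝ) (Jmap m g)).comp T) v u := by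
      intro u v
      simp only [ContinuousLinearMap.comp_apply, ContinuousLinearMap.apply_apply]
      rw [hT, T_symm23 hf x u (Jmap m g) v]
      rw [congrFun (congrArg DFunLike.coe (T_symm12 hf x u v)) (Jmap m g)]
      rw [T_symm23 hf x v u (Jmap m g)]
    have := skew_trace ((ContinuousLinearMap.apply ℝ (EuclideanSpace ℂ (Fin m) →L[ℝ] ℝ)
        (Jmap m g)).comp T) hsym
    simpa using this
  have hHterm : ∀ i, H (Jmap m (sharpL m (H (e i)))) (Jmap m (e i)) =
      ∑ j, H (e i) (e j) * H (Jmap m (e j)) (Jmap m (e i)) := by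
    intro i
    have hrepr : sharpL m (H (e i)) = ∑ j, (H (e i) (e j)) • e j := by
      conv_lhs => rw [← e.sum_repr' (sharpL m (H (e i)))]
      refine Finset.sum_congr rfl fun j _ => ?_
      rw [real_inner_comm, inner_sharpL]
    rw [hrepr, map_sum]
    simp only [map_smul]
    rw [map_sum]
    simp only [ContinuousLinearMap.coe_sum', Finset.sum_apply, ContinuousLinearMap.smul_apply,
      smul_eq_mul]
    refine Finset.sum_congr rfl fun j _ => ?_
    rw [map_smul, ContinuousLinearMap.smul_apply, smul_eq_mul]
  have hfirst : ∑ i, D (e i) (Jmap m (e i)) =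
      ∑ i, ∑ j, H (e i) (e j) * H (Jmap m (e i)) (Jmap m (e j)) := by
    calc ∑ i, D (e i) (Jmap m (e i))
        = ∑ i, (H (Jmap m (sharpL m (H (e i)))) (Jmap m (e i)) + T (e i) (Jmap m g) (Jmap m (e i))) := by
          exact Finset.sum_congr rfl fun i _ => hDsplit i
      _ = ∑ i, H (Jmap m (sharpL m (H (e i)))) (Jmap m (e i)) +
            ∑ i, T (e i) (Jmap m g) (Jmap m (e i)) := Finset.sum_add_distrib
      _ = ∑ i, ∑ j, H (e i) (e j) * H (Jmap m (e j)) (Jmap m (e i)) := by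
          rw [hskew, add_zero]
          exact Finset.sum_congr rfl fun i _ => hHterm i
      _ = ∑ i, ∑ j, H (e j) (e i) * H (Jmap m (e i)) (Jmap m (e j)) := Finset.sum_comm
      _ = ∑ i, ∑ j, H (e i) (e j) * H (Jmap m (e i)) (Jmap m (e j)) := by
          refine Finset.sum_congr rfl fun i _ => Finset.sum_congr rfl fun j _ => ?_
          rw [show H (e j) (e i) = H (e i) (e j) from hess_symm hf x (e j) (e i)]
  -- second part
  have hR'app : ∀ i, R' (e i) = (p - 2) * ‖g‖ ^ (p - 2 - 1) * (‖g‖⁻¹ * (H (e i) g)) := by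
    intro i
    rw [hR']
    simp only [ContinuousLinearMap.smul_apply, smul_eq_mul, ContinuousLinearMap.comp_apply,
      innerSL_apply_apply]
    rw [real_inner_comm, inner_sharpL]
  have hsecond : ∑ i, R' (e i) * ⟪wfield f x, e i⟫_ℝ =
      (p - 2) * ‖g‖ ^ (p - 4) * ⟪sharpC (H g), wfield f x⟫_ℝ := by
    have hw : ⟪sharpC (H g), wfield f x⟫_ℝ = ∑ i, H (e i) g * ⟪wfield f x, e i⟫_ℝ := by
      rw [← e.sum_inner_mul_inner (sharpC (H g)) (wfield f x)]
      refine Finset.sum_congr rfl fun i _ => ?_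
      rw [sharpC_eq, inner_sharpL, real_inner_comm ((e : _) i) (wfield f x),
        hess_symm hf x g (e i)]
    rw [hw, Finset.mul_sum]
    refine Finset.sum_congr rfl fun i _ => ?_
    have hexp : ‖g‖ ^ (p - 2 - 1) * ‖g‖⁻¹ = ‖g‖ ^ (p - 4) := by
      rw [← Real.rpow_neg_one ‖g‖, ← Real.rpow_add hpos]
      congr 1
      ring
    rw [hR'app i, ← hexp]
    ring
  rw [hfirst, hsecond]
  rfl
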